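/- Let A be a left brace. Then the map λ : A → Aut(A,+), a ↦ λ_a, satisfies λ_{a+b} = λ_a ∘ λ_b for all a, b ∈ A (i.e., λ is a group homomorphism from the additive group (A,+) into Aut(A,+)) if and only if A is a trivial left brace or A has multipermutation level 2. -/
import Mathlib


/-- A left brace structure on a type carrying an abelian additive group structure `+`
and a (multiplicative) group structure `∘` (written `*`). -/
class LeftBrace (A : Type*) [AddCommGroup A] [Group A] : Prop where
  compat : ∀ a b c : A, a * (b + c) + a = a * b + a * c

section Brace

variable {A : Type*} [AddCommGroup A] [Group A]

/-- The map `λ_a : b ↦ -a + a ∘ b`, as a permutation of `A`. -/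
def lam (a : A) : Equiv.Perm A where
  toFun b := -a + a * b
  invFun b := a⁻¹ * (a + b)
  left_inv b := by simp
  right_inv b := by simp

/-- A subset of a left brace is a sub-left-brace if it is simultaneously (the carrier of)
a subgroup of `(A,+)` and a subgroup of `(A,∘)`. -/
def IsSubBrace (B : Set A) : Prop :=
  ∃ (Sa : AddSubgroup A) (Sm : Subgroup A), (Sa : Set A) = B ∧ (Sm : Set A) = B

/-- `A(x)`: the smallest sub-left-brace containing `x`. -/
def braceClosure (x : A) : Set A := ⋂₀ {B : Set A | IsSubBrace B ∧ x ∈ B}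

end Brace

/-- The socle series of a left brace: `Soc_0 = {0}`,
`Soc_{n+1} = {a | ∀ b, a + b - a∘b ∈ Soc_n}`. -/
def socSeq (A : Type*) [AddCommGroup A] [Group A] : ℕ → Set A
  | 0 => {0}
  | n + 1 => {a | ∀ b, a + b - a * b ∈ socSeq A n}

/-- A left brace has multipermutation level `n` if `n` is minimal with `Soc_n(A) = A`. -/
def BraceMPL (A : Type*) [AddCommGroup A] [Group A] (n : ℕ) : Prop :=
  socSeq A n = Set.univ ∧ ∀ m < n, socSeq A m ≠ Set.univ

section Aux

variable {A : Type} [AddCommGroup A] [Group A] [LeftBrace A]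

lemma lb_mul_add (a b c : A) : a * (b + c) = a * b + a * c - a := by
  rw [eq_sub_iff_add_eq]; exact LeftBrace.compat a b c

lemma lb_mul_zero (a : A) : a * 0 = a := by
  have h := LeftBrace.compat a 0 0
  rw [add_zero] at h
  exact (add_left_cancel h).symm

lemma lb_one_eq_zero : (1 : A) = 0 := by
  have := lb_mul_zero (1 : A)
  rw [one_mul] at this
  exact this.symm

lemma lb_zero_mul (c : A) : (0 : A) * c = c := by
  rw [← lb_one_eq_zero, one_mul]

lemma lb_mul_neg (a b : A) : a * (-b) = a + a - a * b := by
  have h := lb_mul_add a b (-b)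
  rw [add_neg_cancel, lb_mul_zero] at h
  rw [eq_sub_iff_add_eq] at h
  rw [eq_sub_iff_add_eq, add_comm]
  exact h.symm

set_option linter.unusedSectionVars false in
lemma lam_apply (a b : A) : lam a b = -a + a * b := rfl

lemma lam_zero (c : A) : lam (0 : A) c = c := by
  rw [lam_apply, lb_zero_mul, neg_zero, zero_add]

lemma lam_mul (a b c : A) : lam (a * b) c = lam a (lam b c) := by
  rw [lam_apply, lam_apply, lam_apply, lb_mul_add, lb_mul_neg, ← mul_assoc]
  abel

end Aux

/-- In a left brace `A`, the map `λ` satisfies `λ_{a+b} = λ_a ∘ λ_b`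
for all `a, b` (i.e. `λ` is a homomorphism from `(A,+)` into `Aut(A,+)`) iff `A` is a
trivial left brace or `A` has multipermutation level 2. -/
theorem stmt14 {A : Type} [AddCommGroup A] [Group A] [LeftBrace A] :
    (∀ a b c : A, lam (a + b) c = lam a (lam b c)) ↔
      ((∀ a b : A, a * b = a + b) ∨ BraceMPL A 2) := by
  constructor
  · intro H
    -- λ_{a+b-a*b} = id
    have hinv : ∀ x c : A, lam x (lam (-x) c) = c := by
      intro x c
      have := H x (-x) c
      rw [add_neg_cancel, lam_zero] at this
      exact this.symm
    have hlamd : ∀ a b c : A, lam (a + b - a * b) c = c := by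
      intro a b c
      have h1 : lam (a + b - a * b) c = lam (a + b) (lam (-(a * b)) c) := by
        rw [sub_eq_add_neg]; exact H _ _ _
      rw [h1, H, ← lam_mul, hinv]
    have hd : ∀ a b c : A, (a + b - a * b) * c = (a + b - a * b) + c := by
      intro a b c
      have h := hlamd a b c
      rw [lam_apply] at h
      conv_rhs => rw [← h]
      abel
    have soc2 : socSeq A 2 = Set.univ := by
      ext a
      simp only [Set.mem_univ, iff_true]
      intro b
      show ∀ c, _ ∈ _
      intro c
      show _ ∈ ({0} : Set A)
      rw [Set.mem_singleton_iff, hd a b c]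
      abel
    by_cases htriv : ∀ a b : A, a * b = a + b
    · exact Or.inl htriv
    · refine Or.inr ⟨soc2, ?_⟩
      intro m hm
      interval_cases m
      · intro h0
        apply htriv
        intro a b
        have ha : a = 0 := by
          have : a ∈ socSeq A 0 := h0 ▸ Set.mem_univ a
          simpa [socSeq] using this
        have hb : b = 0 := by
          have : b ∈ socSeq A 0 := h0 ▸ Set.mem_univ b
          simpa [socSeq] using this
        rw [ha, hb, lb_zero_mul, add_zero]
      · intro h1
        apply htriv
        intro a b
        have : a ∈ socSeq A 1 := h1 ▸ Set.mem_univ a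
        have hb : a + b - a * b ∈ ({0} : Set A) := this b
        rw [Set.mem_singleton_iff, sub_eq_zero] at hb
        exact hb.symm
  · rintro (htriv | ⟨h2, _⟩) a b c
    · have key : ∀ x y : A, lam x y = y := by
        intro x y
        rw [lam_apply, htriv, neg_add_cancel_left]
      rw [key, key, key]
    · have ha : a ∈ socSeq A 2 := h2 ▸ Set.mem_univ a
      have hab := ha b
      have hd : ∀ c, (a + b - a * b) * c = (a + b - a * b) + c := by
        intro c
        have h : a + b - a * b + c - (a + b - a * b) * c ∈ ({0} : Set A) := hab c
        rw [Set.mem_singleton_iff, sub_eq_zero] at h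
        exact h.symm
      have hsum : a + b = (a + b - a * b) * (a * b) := by
        rw [hd]; abel
      rw [hsum, lam_mul, lam_apply (a + b - a * b), hd, ← lam_mul]
      abel
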